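/- arXiv:1405.2463 — 3 statements merged into one kernel-verified Lean document; each statement's English description precedes it below -/
import Mathlib

section
/- Let 0 < r₀ < 1, θ₁ < θ₂ with θ₂ − θ₁ < 2π, and let A = { r e^{iθ} : r ∈ [r₀,1], θ ∈ [θ₁,θ₂] }. Suppose f : A → ℂ is such that z ↦ log(f(z)/z) admits an analytic branch L on an open neighborhood of A, |f(z)| = 1 for all z ∈ A with |z| = 1, and |L'(z)| < δ for all z ∈ A, where δ > 0. Then |z|^{1+δ} ≤ |f(z)| ≤ |z|^{1−δ} for all z ∈ A. -/
/-!
Along the radius from `e^{iθ}` to `z = r e^{iθ}` the mean value theorem gives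
`|L z - L(e^{iθ})| ≤ δ (1 - r)`, and `Re L(e^{iθ}) = 0` because `|f| = 1` on the outer arc.
Hence `|f z| = r e^{Re L z}` with `|Re L z| ≤ δ (1 - r) ≤ -δ log r`, which is the claim.
-/

open Complex

def annularSector (r₀ θ₁ θ₂ : ℝ) : Set ℂ :=
  {z | ∃ r ∈ Set.Icc r₀ 1, ∃ θ ∈ Set.Icc θ₁ θ₂, z = (r : ℂ) * exp ((θ : ℂ) * I)}

theorem segment_subset_annularSector {r₀ θ₁ θ₂ r θ : ℝ} (hr : r ∈ Set.Icc r₀ 1)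
    (hθ : θ ∈ Set.Icc θ₁ θ₂) :
    segment ℝ (exp ((θ : ℂ) * I)) ((r : ℂ) * exp ((θ : ℂ) * I)) ⊆ annularSector r₀ θ₁ θ₂ := by
  rintro w ⟨a, b, ha, hb, hab, rfl⟩
  have h1 : (1 : ℝ) ∈ Set.Icc r₀ 1 := ⟨hr.1.trans hr.2, le_rfl⟩
  refine ⟨a • 1 + b • r, convex_Icc r₀ 1 h1 hr ha hb hab, θ, hθ, ?_⟩
  simp only [real_smul, smul_eq_mul, mul_one]
  push_cast
  ring

theorem norm_eq_mul_exp_re_of_exp_eq_div {w a z : ℂ} (hz : z ≠ 0) (h : exp w = a / z) :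
    ‖a‖ = ‖z‖ * Real.exp w.re := by
  rw [← norm_exp, h, norm_div, mul_div_cancel₀ _ (norm_ne_zero_iff.mpr hz)]

theorem re_eq_zero_of_exp_eq_div {w a z : ℂ} (h : exp w = a / z) (ha : ‖a‖ = 1) (hz : ‖z‖ = 1) :
    w.re = 0 := by
  rw [← Real.exp_eq_one_iff, ← norm_exp, h, norm_div, ha, hz, div_one]

namespace Real

theorem rpow_one_add_le_mul_exp {r δ x : ℝ} (hr : 0 < r) (hδ : 0 ≤ δ)
    (hx : -(δ * (1 - r)) ≤ x) : r ^ (1 + δ) ≤ r * exp x := by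
  have hlog : δ * log r ≤ δ * (r - 1) :=
    mul_le_mul_of_nonneg_left (log_le_sub_one_of_pos hr) hδ
  rw [rpow_add hr, rpow_one, rpow_def_of_pos hr]
  gcongr
  linarith

theorem mul_exp_le_rpow_one_sub {r δ x : ℝ} (hr : 0 < r) (hδ : 0 ≤ δ)
    (hx : x ≤ δ * (1 - r)) : r * exp x ≤ r ^ (1 - δ) := by
  have hlog : δ * log r ≤ δ * (r - 1) :=
    mul_le_mul_of_nonneg_left (log_le_sub_one_of_pos hr) hδ
  rw [sub_eq_add_neg, rpow_add hr, rpow_one, rpow_def_of_pos hr]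
  gcongr
  linarith

end Real

theorem sector_estimate_general (r₀ θ₁ θ₂ δ : ℝ) (hr0 : 0 < r₀) (hδ : 0 < δ)
    (A : Set ℂ)
    (hA : A = {z | ∃ r ∈ Set.Icc r₀ 1, ∃ θ ∈ Set.Icc θ₁ θ₂,
      z = (r : ℂ) * Complex.exp ((θ : ℂ) * Complex.I)})
    (f L : ℂ → ℂ) (U : Set ℂ) (hU : IsOpen U) (hAU : A ⊆ U)
    (hL : DifferentiableOn ℂ L U)
    (hbranch : ∀ z ∈ A, Complex.exp (L z) = f z / z)
    (hbd : ∀ z ∈ A, ‖z‖ = 1 → ‖f z‖ = 1)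
    (hder : ∀ z ∈ A, ‖deriv L z‖ < δ) :
    ∀ z ∈ A, ‖z‖ ^ (1 + δ) ≤ ‖f z‖ ∧
      ‖f z‖ ≤ ‖z‖ ^ (1 - δ) := by
  subst hA
  rintro _ ⟨r, hr, θ, hθr, rfl⟩
  set c := exp ((θ : ℂ) * I)
  have hc : ‖c‖ = 1 := norm_exp_ofReal_mul_I θ
  have hrpos : 0 < r := hr0.trans_le hr.1
  have hseg := segment_subset_annularSector hr hθr
  have hcA := hseg (left_mem_segment ℝ _ _)
  have hzA := hseg (right_mem_segment ℝ _ _)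
  have hnorm : ‖(r : ℂ) * c‖ = r := by
    rw [norm_mul, hc, mul_one, norm_real, Real.norm_of_nonneg hrpos.le]
  have hradius : ‖(r : ℂ) * c - c‖ = 1 - r := by
    rw [← sub_one_mul, ← ofReal_one, ← ofReal_sub, norm_mul, hc, mul_one, norm_real,
      Real.norm_of_nonpos (by linarith [hr.2]), neg_sub]
  have hmvt : ‖L (r * c) - L c‖ ≤ δ * (1 - r) := hradius ▸
    (convex_segment _ _).norm_image_sub_le_of_norm_deriv_le
      (fun x hx => hL.differentiableAt (hU.mem_nhds (hAU (hseg hx))))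
      (fun x hx => (hder x (hseg hx)).le) (left_mem_segment ℝ _ _) (right_mem_segment ℝ _ _)
  have hre : |(L (r * c)).re| ≤ δ * (1 - r) := by
    have hre0 := re_eq_zero_of_exp_eq_div (hbranch c hcA) (hbd c hcA hc) hc
    calc |(L (r * c)).re| = |(L (r * c) - L c).re| := by rw [sub_re, hre0, sub_zero]
      _ ≤ ‖L (r * c) - L c‖ := abs_re_le_norm _
      _ ≤ δ * (1 - r) := hmvt
  have hz0 : (r : ℂ) * c ≠ 0 := mul_ne_zero (ofReal_ne_zero.mpr hrpos.ne') (exp_ne_zero _)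
  rw [norm_eq_mul_exp_re_of_exp_eq_div hz0 (hbranch _ hzA), hnorm]
  exact ⟨Real.rpow_one_add_le_mul_exp hrpos hδ.le (neg_le_of_abs_le hre),
    Real.mul_exp_le_rpow_one_sub hrpos hδ.le (le_of_abs_le hre)⟩

/-- Sector estimate. On the compact annular sector A = A(r₀,θ₁,θ₂), if
log(f(z)/z) admits an analytic branch L on a neighborhood of A, |f| = 1 on the outer arc,
and |L'| < δ on A, then |z|^{1+δ} ≤ |f(z)| ≤ |z|^{1−δ} on A. -/
theorem sector_estimate (r₀ θ₁ θ₂ δ : ℝ) (hr0 : 0 < r₀) (hr1 : r₀ < 1)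
    (hθ : θ₁ < θ₂) (hθ2 : θ₂ - θ₁ < 2 * Real.pi) (hδ : 0 < δ)
    (A : Set ℂ)
    (hA : A = {z | ∃ r ∈ Set.Icc r₀ 1, ∃ θ ∈ Set.Icc θ₁ θ₂,
      z = (r : ℂ) * Complex.exp ((θ : ℂ) * Complex.I)})
    (f L : ℂ → ℂ) (U : Set ℂ) (hU : IsOpen U) (hAU : A ⊆ U)
    (hL : DifferentiableOn ℂ L U)
    (hbranch : ∀ z ∈ A, Complex.exp (L z) = f z / z)
    (hbd : ∀ z ∈ A, ‖z‖ = 1 → ‖f z‖ = 1)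
    (hder : ∀ z ∈ A, ‖deriv L z‖ < δ) :
    ∀ z ∈ A, ‖z‖ ^ (1 + δ) ≤ ‖f z‖ ∧
      ‖f z‖ ≤ ‖z‖ ^ (1 - δ) :=
  sector_estimate_general r₀ θ₁ θ₂ δ hr0 hδ A hA f L U hU hAU hL hbranch hbd hder
end

section
/- Suppose a : [0,T]×[0,T] → ℝ is such that t ↦ a(t,τ) is strictly increasing for each τ, and for every ε > 0 there is δ > 0 such that for all 0 ≤ s < t ≤ T with t − s < δ and all τ, τ' with |τ − τ'| < δ: 1 − ε < (a(t,τ) − a(s,τ)) / (a(t,τ') − a(s,τ')) < 1 + ε. If additionally both t ↦ c(t) := lim_{|Z|→0} Σ_l [a(t_{l+1},t_l) − a(t_l,t_l)] and t ↦ a(t,t) are differentiable at t₀ ∈ [0,T], then the limit λ(t₀) := lim_{t→t₀} (a(t,t₀) − a(t₀,t₀))/(t − t₀) exists and equals c'(t₀). -/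
/-!
Fix `t₀` and compare the increments of `c` with those of `a(·, t₀)` near `t₀`. For `u < v` close
to `t₀`, `c v - c u` is the limit of the sums `Σ [a(q_{i+1}, q_i) - a(q_i, q_i)]` over fine chains
`u = q₀ < ⋯ < q_N = v` (append such a chain to a fine partition of `[0, u]` and subtract). By
comparability, each summand is `a(q_{i+1}, t₀) - a(q_i, t₀)` up to a factor in `(1 - ε, 1 + ε)`, and
these telescope to `a(v, t₀) - a(u, t₀)`. Hence `(c t - c t₀) / (a(t, t₀) - a(t₀, t₀)) → 1` as
`t → t₀`, and dividing the slope of `c` at `t₀` by this ratio gives the difference quotient of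
`a(·, t₀)`, which therefore tends to `c'(t₀)`.
-/

/-- A partition 0 = t₀ < t₁ < ... < t_n = t of [0,t]. -/
structure TimePartition (t : ℝ) where
  n : ℕ
  pts : ℕ → ℝ
  mono : ∀ i, i < n → pts i < pts (i + 1)
  first : pts 0 = 0
  last : pts n = t

/-- The mesh of a partition: the maximal step size. -/
noncomputable def TimePartition.mesh {t : ℝ} (P : TimePartition t) : ℝ :=
  (Finset.range P.n).fold max 0 fun i => P.pts (i + 1) - P.pts i

/-- The telescoping sum S(a,P) = Σ_l [a(t_{l+1},t_l) − a(t_l,t_l)]. -/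
noncomputable def psum {t : ℝ} (a : ℝ → ℝ → ℝ) (P : TimePartition t) : ℝ :=
  ∑ i ∈ Finset.range P.n, (a (P.pts (i + 1)) (P.pts i) - a (P.pts i) (P.pts i))

open Set Filter Topology

def IncrementsComparable (a : ℝ → ℝ → ℝ) (T : ℝ) : Prop :=
  ∀ ε > 0, ∃ δ > 0, ∀ s t τ τ' : ℝ, s ∈ Icc 0 T → t ∈ Icc 0 T →
    τ ∈ Icc 0 T → τ' ∈ Icc 0 T → s < t → t - s < δ → |τ - τ'| < δ →
    1 - ε < (a t τ - a s τ) / (a t τ' - a s τ') ∧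
      (a t τ - a s τ) / (a t τ' - a s τ') < 1 + ε

def HasPsumLimit (a : ℝ → ℝ → ℝ) (t L : ℝ) : Prop :=
  ∀ ε > 0, ∃ δ > 0, ∀ P : TimePartition t, P.mesh < δ → |psum a P - L| < ε

def chainSum (a : ℝ → ℝ → ℝ) (q : ℕ → ℝ) (N : ℕ) : ℝ :=
  ∑ i ∈ Finset.range N, (a (q (i + 1)) (q i) - a (q i) (q i))

theorem psum_eq_chainSum {t : ℝ} (a : ℝ → ℝ → ℝ) (P : TimePartition t) :
    psum a P = chainSum a P.pts P.n :=
  rfl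

structure IsFineChain (q : ℕ → ℝ) (N : ℕ) (u v δ : ℝ) : Prop where
  first : q 0 = u
  last : q N = v
  step : ∀ i < N, q i < q (i + 1) ∧ q (i + 1) - q i < δ

namespace IsFineChain

variable {q : ℕ → ℝ} {N : ℕ} {u v δ : ℝ}

theorem mono_delta (hq : IsFineChain q N u v δ) {δ' : ℝ} (hδ : δ ≤ δ') :
    IsFineChain q N u v δ' :=
  ⟨hq.first, hq.last, fun i hi => ⟨(hq.step i hi).1, (hq.step i hi).2.trans_le hδ⟩⟩

theorem monotoneOn (hq : IsFineChain q N u v δ) : MonotoneOn q (Iic N) := by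
  intro i _ j hjN hij
  induction j, hij using Nat.le_induction with
  | base => exact le_rfl
  | succ j _ ih =>
    exact (ih (Nat.le_of_succ_le hjN)).trans (hq.step j (Nat.lt_of_succ_le hjN)).1.le

theorem mem_Icc (hq : IsFineChain q N u v δ) {i : ℕ} (hi : i ≤ N) : q i ∈ Icc u v :=
  ⟨hq.first ▸ hq.monotoneOn (Nat.zero_le N) hi (Nat.zero_le i),
    hq.last ▸ hq.monotoneOn hi self_mem_Iic hi⟩

end IsFineChain

theorem exists_isFineChain {u v δ : ℝ} (huv : u ≤ v) (hδ : 0 < δ) :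
    ∃ (N : ℕ) (q : ℕ → ℝ), IsFineChain q N u v δ := by
  rcases huv.eq_or_lt with rfl | huv
  · exact ⟨0, fun _ => u, rfl, rfl, fun i hi => absurd hi (Nat.not_lt_zero i)⟩
  obtain ⟨N, hN⟩ := exists_nat_gt ((v - u) / δ)
  have hN0 : (0 : ℝ) < N := (div_pos (sub_pos.2 huv) hδ).trans hN
  have hstep : ∀ i : ℕ, (u + (i + 1 : ℕ) * ((v - u) / N)) - (u + i * ((v - u) / N))
      = (v - u) / N := fun i => by push_cast; ring
  refine ⟨N, fun i => u + i * ((v - u) / N), by simp, ?_, fun i _ => ?_⟩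
  · show u + N * ((v - u) / N) = v
    rw [mul_div_cancel₀ _ hN0.ne']
    ring
  · rw [← sub_pos, hstep, div_lt_iff₀ hN0, ← div_lt_iff₀' hδ]
    exact ⟨div_pos (sub_pos.2 huv) hN0, hN⟩

theorem abs_chainSum_sub_le {a : ℝ → ℝ → ℝ} {q : ℕ → ℝ} {N : ℕ} {τ ε : ℝ}
    (h : ∀ i < N, |a (q (i + 1)) (q i) - a (q i) (q i) - (a (q (i + 1)) τ - a (q i) τ)|
      ≤ ε * (a (q (i + 1)) τ - a (q i) τ)) :
    |chainSum a q N - (a (q N) τ - a (q 0) τ)| ≤ ε * (a (q N) τ - a (q 0) τ) := by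
  rw [← Finset.sum_range_sub (fun i => a (q i) τ), chainSum, ← Finset.sum_sub_distrib,
    Finset.mul_sum]
  exact (Finset.abs_sum_le_sum_abs _ _).trans
    (Finset.sum_le_sum fun i hi => h i (Finset.mem_range.1 hi))

/-- Concatenation of `p 0, …, p m` and `q 1, q 2, …`, which is only sensible when `p m = q 0`. -/
def appendSeq (p q : ℕ → ℝ) (m : ℕ) (i : ℕ) : ℝ :=
  if i ≤ m then p i else q (i - m)

section appendSeq

variable {p q : ℕ → ℝ} {m : ℕ}

theorem appendSeq_of_le {i : ℕ} (hi : i ≤ m) : appendSeq p q m i = p i :=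
  if_pos hi

theorem appendSeq_add (hpq : p m = q 0) (j : ℕ) : appendSeq p q m (m + j) = q j := by
  rcases j.eq_zero_or_pos with rfl | hj
  · simpa [appendSeq] using hpq
  · rw [appendSeq, if_neg (by omega), Nat.add_sub_cancel_left]

theorem forall_appendSeq_succ (R : ℝ → ℝ → Prop) (hpq : p m = q 0) {N : ℕ}
    (hp : ∀ i < m, R (p i) (p (i + 1))) (hq : ∀ j < N, R (q j) (q (j + 1))) :
    ∀ i < m + N, R (appendSeq p q m i) (appendSeq p q m (i + 1)) := by
  intro i hi
  rcases lt_or_ge i m with him | him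
  · rw [appendSeq_of_le him.le, appendSeq_of_le him]
    exact hp i him
  · obtain ⟨j, rfl⟩ := Nat.exists_eq_add_of_le him
    rw [appendSeq_add hpq, add_assoc, appendSeq_add hpq]
    exact hq j (by omega)

theorem chainSum_appendSeq (a : ℝ → ℝ → ℝ) (hpq : p m = q 0) (N : ℕ) :
    chainSum a (appendSeq p q m) (m + N) = chainSum a p m + chainSum a q N := by
  rw [chainSum, Finset.sum_range_add]
  congr 1
  · refine Finset.sum_congr rfl fun i hi => ?_
    have hi := Finset.mem_range.1 hi
    rw [appendSeq_of_le hi.le, appendSeq_of_le hi]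
  · refine Finset.sum_congr rfl fun j _ => ?_
    rw [appendSeq_add hpq, add_assoc, appendSeq_add hpq]

theorem IsFineChain.append {N : ℕ} {u v w δ : ℝ} (hp : IsFineChain p m u v δ)
    (hq : IsFineChain q N v w δ) : IsFineChain (appendSeq p q m) (m + N) u w δ where
  first := by rw [appendSeq_of_le (Nat.zero_le m), hp.first]
  last := by rw [appendSeq_add (hp.last.trans hq.first.symm), hq.last]
  step := forall_appendSeq_succ (fun x y => x < y ∧ y - x < δ)
    (hp.last.trans hq.first.symm) hp.step hq.step

end appendSeq

def TimePartition.ofFineChain {q : ℕ → ℝ} {N : ℕ} {t δ : ℝ} (hq : IsFineChain q N 0 t δ) :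
    TimePartition t :=
  ⟨N, q, fun i hi => (hq.step i hi).1, hq.first, hq.last⟩

theorem TimePartition.mesh_ofFineChain_lt {q : ℕ → ℝ} {N : ℕ} {t δ : ℝ}
    (hq : IsFineChain q N 0 t δ) (hδ : 0 < δ) : (TimePartition.ofFineChain hq).mesh < δ := by
  rw [TimePartition.mesh, Finset.fold_max_lt]
  exact ⟨hδ, fun i hi => (hq.step i (Finset.mem_range.1 hi)).2⟩

theorem exists_isFineChain_abs_chainSum_sub_lt {a : ℝ → ℝ → ℝ} {c : ℝ → ℝ} {u v δ η : ℝ}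
    (hu : HasPsumLimit a u (c u)) (hv : HasPsumLimit a v (c v)) (hu₀ : 0 ≤ u) (huv : u ≤ v)
    (hδ : 0 < δ) (hη : 0 < η) :
    ∃ (N : ℕ) (q : ℕ → ℝ), IsFineChain q N u v δ ∧ |chainSum a q N - (c v - c u)| < η := by
  obtain ⟨δu, hδu, hPu⟩ := hu (η / 2) (half_pos hη)
  obtain ⟨δv, hδv, hPv⟩ := hv (η / 2) (half_pos hη)
  set δ₀ := min δ (min δu δv)
  have hδ₀ : 0 < δ₀ := lt_min hδ (lt_min hδu hδv)
  obtain ⟨m, p, hp⟩ := exists_isFineChain hu₀ hδ₀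
  obtain ⟨N, q, hq⟩ := exists_isFineChain huv hδ₀
  have hpq := hp.last.trans hq.first.symm
  have hP := hPu _ ((TimePartition.mesh_ofFineChain_lt hp hδ₀).trans_le
    ((min_le_right _ _).trans (min_le_left _ _)))
  have hR := hPv _ ((TimePartition.mesh_ofFineChain_lt (hp.append hq) hδ₀).trans_le
    ((min_le_right _ _).trans (min_le_right _ _)))
  rw [psum_eq_chainSum] at hP hR
  simp only [TimePartition.ofFineChain, chainSum_appendSeq a hpq] at hP hR
  refine ⟨N, q, hq.mono_delta (min_le_left _ _), ?_⟩
  rw [abs_lt] at hP hR ⊢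
  constructor <;> linarith

theorem abs_sub_le_mul_of_lt_div_lt {x y ε : ℝ} (hy : 0 < y) (h₁ : 1 - ε < x / y)
    (h₂ : x / y < 1 + ε) : |x - y| ≤ ε * y := by
  rw [lt_div_iff₀ hy] at h₁
  rw [div_lt_iff₀ hy] at h₂
  rw [abs_le]
  constructor <;> linarith

theorem IncrementsComparable.exists_abs_sub_le {a : ℝ → ℝ → ℝ} {c : ℝ → ℝ} {T t₀ ε : ℝ}
    (hcomp : IncrementsComparable a T) (hc : ∀ t ∈ Icc 0 T, HasPsumLimit a t (c t))
    (ht₀ : t₀ ∈ Icc 0 T) (hmono : StrictMonoOn (fun t => a t t₀) (Icc 0 T)) (hε : 0 < ε) :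
    ∃ δ > 0, ∀ u ∈ Icc 0 T, ∀ v ∈ Icc 0 T, |u - t₀| < δ → |v - t₀| < δ →
      |c v - c u - (a v t₀ - a u t₀)| ≤ ε * |a v t₀ - a u t₀| := by
  obtain ⟨δ, hδ, H⟩ := hcomp ε hε
  refine ⟨δ, hδ, fun u hu v hv hut hvt => ?_⟩
  wlog huv : u ≤ v generalizing u v
  · calc |c v - c u - (a v t₀ - a u t₀)| = |c u - c v - (a u t₀ - a v t₀)| := by
          rw [← abs_neg]; ring_nf
      _ ≤ ε * |a u t₀ - a v t₀| := this v hv u hu hvt hut (le_of_not_ge huv)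
      _ = ε * |a v t₀ - a u t₀| := by rw [abs_sub_comm]
  rw [abs_of_nonneg (sub_nonneg.2 (hmono.monotoneOn hu hv huv))]
  refine le_of_forall_pos_le_add fun η hη => ?_
  obtain ⟨N, q, hq, hqc⟩ :=
    exists_isFineChain_abs_chainSum_sub_lt (hc u hu) (hc v hv) hu.1 huv hδ hη
  have hqa : |chainSum a q N - (a v t₀ - a u t₀)| ≤ ε * (a v t₀ - a u t₀) := by
    rw [← hq.first, ← hq.last]
    refine abs_chainSum_sub_le fun i hi => ?_
    have hmem : ∀ j ≤ N, q j ∈ Icc 0 T := fun j hj =>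
      ⟨hu.1.trans (hq.mem_Icc hj).1, (hq.mem_Icc hj).2.trans hv.2⟩
    have hdist : |q i - t₀| < δ := by
      have := hq.mem_Icc hi.le
      rw [abs_lt] at hut hvt ⊢
      constructor <;> linarith [this.1, this.2]
    obtain ⟨h₁, h₂⟩ := H _ _ _ _ (hmem i hi.le) (hmem (i + 1) hi) (hmem i hi.le) ht₀
      (hq.step i hi).1 (hq.step i hi).2 hdist
    exact abs_sub_le_mul_of_lt_div_lt
      (sub_pos.2 (hmono (hmem i hi.le) (hmem (i + 1) hi) (hq.step i hi).1)) h₁ h₂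
  have := abs_sub (chainSum a q N - (a v t₀ - a u t₀)) (chainSum a q N - (c v - c u))
  rw [sub_sub_sub_cancel_left] at this
  linarith

theorem IncrementsComparable.tendsto_increment_ratio {a : ℝ → ℝ → ℝ} {c : ℝ → ℝ} {T t₀ : ℝ}
    (hcomp : IncrementsComparable a T) (hc : ∀ t ∈ Icc 0 T, HasPsumLimit a t (c t))
    (ht₀ : t₀ ∈ Icc 0 T) (hmono : StrictMonoOn (fun t => a t t₀) (Icc 0 T)) :
    Tendsto (fun t => (c t - c t₀) / (a t t₀ - a t₀ t₀)) (𝓝[Icc 0 T \ {t₀}] t₀) (𝓝 1) := by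
  rw [Metric.tendsto_nhdsWithin_nhds]
  intro ε hε
  obtain ⟨δ, hδ, H⟩ := hcomp.exists_abs_sub_le hc ht₀ hmono (half_pos hε)
  refine ⟨δ, hδ, fun t ht htδ => ?_⟩
  rw [Real.dist_eq] at htδ ⊢
  have hA : 0 < |a t t₀ - a t₀ t₀| := abs_pos.2 (sub_ne_zero.2 (hmono.injOn.ne ht.1 ht₀ ht.2))
  rw [div_sub_one (abs_pos.1 hA), abs_div, div_lt_iff₀ hA]
  calc |c t - c t₀ - (a t t₀ - a t₀ t₀)| ≤ ε / 2 * |a t t₀ - a t₀ t₀| :=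
        H t₀ ht₀ t ht.1 (by simpa using hδ) htδ
    _ < ε * |a t t₀ - a t₀ t₀| := mul_lt_mul_of_pos_right (half_lt_self hε) hA

theorem lambda_exists_of_differentiable_general (T : ℝ)
    (a : ℝ → ℝ → ℝ) (c : ℝ → ℝ) (t₀ : ℝ) (ht₀ : t₀ ∈ Set.Icc 0 T)
    (hmono : ∀ τ ∈ Set.Icc 0 T, StrictMonoOn (fun t => a t τ) (Set.Icc 0 T))
    (hcomp : ∀ ε > 0, ∃ δ > 0, ∀ s t τ τ' : ℝ, s ∈ Set.Icc 0 T → t ∈ Set.Icc 0 T →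
      τ ∈ Set.Icc 0 T → τ' ∈ Set.Icc 0 T → s < t → t - s < δ → |τ - τ'| < δ →
      1 - ε < (a t τ - a s τ) / (a t τ' - a s τ') ∧
        (a t τ - a s τ) / (a t τ' - a s τ') < 1 + ε)
    (hc : ∀ t ∈ Set.Icc 0 T, ∀ ε > 0, ∃ δ > 0, ∀ P : TimePartition t,
      P.mesh < δ → |psum a P - c t| < ε)
    (c' : ℝ)
    (hc' : HasDerivWithinAt c c' (Set.Icc 0 T) t₀) :
    Filter.Tendsto (fun t => (a t t₀ - a t₀ t₀) / (t - t₀))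
      (nhdsWithin t₀ (Set.Icc 0 T \ {t₀})) (nhds c') := by
  have hratio := IncrementsComparable.tendsto_increment_ratio hcomp hc ht₀ (hmono t₀ ht₀)
  have hlim := (hasDerivWithinAt_iff_tendsto_slope.1 hc').div hratio one_ne_zero
  rw [div_one] at hlim
  refine hlim.congr' ?_
  filter_upwards [hratio.eventually_ne one_ne_zero] with t hr
  obtain ⟨hC, -⟩ := div_ne_zero_iff.1 hr
  rw [Pi.div_apply, slope_def_field, div_div_div_cancel_left' _ _ hC]

/-- If a(t,τ) is strictly increasing in t, satisfies the comparability
hypothesis, and both c(t) = lim_{|Z|→0} S(t,Z) and t ↦ a(t,t) are differentiable at t₀,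
then λ(t₀) = lim_{t→t₀} (a(t,t₀) − a(t₀,t₀))/(t − t₀) exists and equals c'(t₀). -/
theorem lambda_exists_of_differentiable (T : ℝ) (hT : 0 < T)
    (a : ℝ → ℝ → ℝ) (c : ℝ → ℝ) (t₀ : ℝ) (ht₀ : t₀ ∈ Set.Icc 0 T)
    (hmono : ∀ τ ∈ Set.Icc 0 T, StrictMonoOn (fun t => a t τ) (Set.Icc 0 T))
    (hcomp : ∀ ε > 0, ∃ δ > 0, ∀ s t τ τ' : ℝ, s ∈ Set.Icc 0 T → t ∈ Set.Icc 0 T →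
      τ ∈ Set.Icc 0 T → τ' ∈ Set.Icc 0 T → s < t → t - s < δ → |τ - τ'| < δ →
      1 - ε < (a t τ - a s τ) / (a t τ' - a s τ') ∧
        (a t τ - a s τ) / (a t τ' - a s τ') < 1 + ε)
    (hc : ∀ t ∈ Set.Icc 0 T, ∀ ε > 0, ∃ δ > 0, ∀ P : TimePartition t,
      P.mesh < δ → |psum a P - c t| < ε)
    (c' b' : ℝ)
    (hc' : HasDerivWithinAt c c' (Set.Icc 0 T) t₀)
    (hb' : HasDerivWithinAt (fun t => a t t) b' (Set.Icc 0 T) t₀) :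
    Filter.Tendsto (fun t => (a t t₀ - a t₀ t₀) / (t - t₀))
      (nhdsWithin t₀ (Set.Icc 0 T \ {t₀})) (nhds c') :=
  lambda_exists_of_differentiable_general T a c t₀ ht₀ hmono hcomp hc c' hc'
end

section
/- Let (f_n) be a sequence of injective holomorphic functions on domains Ω_n ⊆ ℂ with 0 ∈ Ω_n, f_n(0) = 0, f_n'(0) ≥ 1 for all n, and suppose f_n converges locally uniformly (in the dynamic-domain sense) on (Ω_n) to a holomorphic function f on the kernel Ω of the sequence. Then f is nonconstant and injective on Ω. -/
/-!
Derivatives at `0` pass to the limit (Weierstrass), so `f'(0) = lim fₙ'(0)` has real part at least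
`1`; in particular `f` is nonconstant. For injectivity (Hurwitz): if `f a = f b` with `a ≠ b`, the
zero `b` of `f - f a` is isolated, so `f - f a` is bounded away from `0` on a small circle around
`b` avoiding `a`. By the minimum modulus principle a holomorphic function that is uniformly close to
`f - f a` on that disc, such as `fₙ - fₙ a` for large `n`, must vanish in it, contradicting the
injectivity of `fₙ`.
-/

open Set Metric Filter Topology

theorem le_norm_of_forall_mem_sphere_le_norm {g : ℂ → ℂ} {c : ℂ} {r δ : ℝ} (hr : 0 < r)
    (hg : DifferentiableOn ℂ g (closedBall c r)) (hg₀ : ∀ z ∈ closedBall c r, g z ≠ 0)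
    (hδ : ∀ z ∈ sphere c r, δ ≤ ‖g z‖) : δ ≤ ‖g c‖ := by
  rcases le_or_gt δ 0 with hδ₀ | hδ₀
  · exact hδ₀.trans (norm_nonneg _)
  have hinv : DiffContOnCl ℂ (fun z => (g z)⁻¹) (ball c r) :=
    (hg.inv hg₀).diffContOnCl_ball subset_rfl
  have : ‖(g c)⁻¹‖ ≤ δ⁻¹ := by
    refine Complex.norm_le_of_forall_mem_frontier_norm_le isBounded_ball hinv (fun z hz => ?_)
      (subset_closure (mem_ball_self hr))
    rw [frontier_ball c hr.ne'] at hz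
    rw [norm_inv]
    exact inv_anti₀ hδ₀ (hδ z hz)
  rwa [norm_inv, inv_le_inv₀ (norm_pos_iff.2 (hg₀ c (mem_closedBall_self hr.le))) hδ₀] at this

theorem TendstoUniformlyOn.eventually_exists_zero_of_closedBall {ι : Type*} {p : Filter ι}
    {F : ι → ℂ → ℂ} {g : ℂ → ℂ} {c : ℂ} {r : ℝ} (hr : 0 < r)
    (hF : TendstoUniformlyOn F g p (closedBall c r))
    (hFd : ∀ᶠ n in p, DifferentiableOn ℂ (F n) (closedBall c r))
    (hg : ContinuousOn g (sphere c r)) (hgc : g c = 0) (hgs : ∀ z ∈ sphere c r, g z ≠ 0) :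
    ∀ᶠ n in p, ∃ z ∈ closedBall c r, F n z = 0 := by
  obtain ⟨δ, hδ, hgδ⟩ : ∃ δ, 0 < δ ∧ ∀ z ∈ sphere c r, δ ≤ ‖g z‖ :=
    (isCompact_sphere c r).exists_forall_le' hg.norm fun z hz => norm_pos_iff.2 (hgs z hz)
  filter_upwards [hFd, Metric.tendstoUniformlyOn_iff.1 hF (δ / 2) (half_pos hδ)]
    with n hFn hclose
  by_contra! hne
  have hlow : δ / 2 ≤ ‖F n c‖ := by
    refine le_norm_of_forall_mem_sphere_le_norm hr hFn hne fun z hz => ?_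
    have h₁ := hclose z (sphere_subset_closedBall hz)
    rw [dist_eq_norm] at h₁
    have h₂ := norm_sub_norm_le (g z) (g z - F n z)
    simp only [sub_sub_cancel] at h₂
    linarith [hgδ z hz]
  have hup := hclose c (mem_closedBall_self hr.le)
  rw [hgc, dist_zero_left] at hup
  linarith

section KernelConvergence

variable {ι : Type*} {p : Filter ι} {F : ι → ℂ → ℂ} {f : ℂ → ℂ} {U : Set ℂ} {V : ι → Set ℂ}

theorem tendsto_deriv_of_forall_isCompact_eventually_subset (hU : IsOpen U)
    (hF : TendstoLocallyUniformlyOn F f p U)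
    (hV : ∀ K, IsCompact K → K ⊆ U → ∀ᶠ n in p, K ⊆ V n)
    (hFd : ∀ n, DifferentiableOn ℂ (F n) (V n)) {x : ℂ} (hx : x ∈ U) :
    Tendsto (fun n => deriv (F n) x) p (𝓝 (deriv f x)) := by
  obtain ⟨r, hr, hrU⟩ := nhds_basis_closedBall.mem_iff.1 (hU.mem_nhds hx)
  have hFd' : ∀ᶠ n in p, DifferentiableOn ℂ (F n) (ball x r) :=
    (hV _ (isCompact_closedBall x r) hrU).mono fun n hn =>
      (hFd n).mono (ball_subset_closedBall.trans hn)
  exact ((hF.mono (ball_subset_closedBall.trans hrU)).deriv hFd' isOpen_ball).tendsto_at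
    (mem_ball_self hr)

theorem injOn_of_tendstoLocallyUniformlyOn [p.NeBot] (hU : IsOpen U) (hUc : IsPreconnected U)
    (hf : DifferentiableOn ℂ f U) (hfc : ¬ ∃ w, ∀ z ∈ U, f z = w)
    (hF : TendstoLocallyUniformlyOn F f p U)
    (hV : ∀ K, IsCompact K → K ⊆ U → ∀ᶠ n in p, K ⊆ V n)
    (hFd : ∀ n, DifferentiableOn ℂ (F n) (V n)) (hinj : ∀ n, InjOn (F n) (V n)) :
    InjOn f U := by
  intro a ha b hb hab
  by_contra hne
  have hanal := hf.analyticOnNhd hU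
  have hiso : ∀ᶠ z in 𝓝[≠] b, f z ≠ f b :=
    ((hanal b hb).eventually_eq_or_eventually_ne analyticAt_const).resolve_left fun h =>
      hfc ⟨f b, fun z hz =>
        hanal.eqOn_of_preconnected_of_eventuallyEq (fun _ _ => analyticAt_const) hUc hb h hz⟩
  obtain ⟨r, hr, hrU, hra, hrf⟩ : ∃ r > 0, closedBall b r ⊆ U ∧ a ∉ closedBall b r ∧
      ∀ z ∈ closedBall b r, z ≠ b → f z ≠ f b := by
    obtain ⟨ε, hε, h⟩ := Metric.eventually_nhds_iff.1 <| (hU.eventually_mem hb).and <|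
      (eventually_ne_nhds (Ne.symm hne)).and (eventually_nhdsWithin_iff.1 hiso)
    have hsub := closedBall_subset_ball (x := b) (half_lt_self hε)
    exact ⟨ε / 2, half_pos hε, fun z hz => (h (hsub hz)).1,
      fun ha' => (h (hsub ha')).2.1 rfl, fun z hz => (h (hsub hz)).2.2⟩
  set K := insert a (closedBall b r)
  have hK : IsCompact K := (isCompact_closedBall b r).insert a
  have hKU : K ⊆ U := insert_subset ha hrU
  have hunif : TendstoUniformlyOn (fun n z => F n z - F n a) (fun z => f z - f a) p
      (closedBall b r) :=
    ((tendstoLocallyUniformlyOn_iff_forall_isCompact hU).1 hF _ hrU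
      (isCompact_closedBall b r)).sub ((hF.tendsto_at ha).tendstoUniformlyOn_const _)
  have hzero := hunif.eventually_exists_zero_of_closedBall hr
    ((hV K hK hKU).mono fun n hn => ((hFd n).mono ((subset_insert _ _).trans hn)).sub_const _)
    ((hf.continuousOn.mono (sphere_subset_closedBall.trans hrU)).sub continuousOn_const)
    (by simp [hab])
    (fun z hz => sub_ne_zero.2 <|
      hab ▸ hrf z (sphere_subset_closedBall hz) (ne_of_mem_sphere hz hr.ne'))
  obtain ⟨n, hKn, z, hz, hFz⟩ := ((hV K hK hKU).and hzero).exists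
  exact hra (hinj n (hKn (subset_insert _ _ hz)) (hKn (mem_insert a _)) (sub_eq_zero.1 hFz) ▸ hz)

end KernelConvergence

theorem limit_injective_general (Ω : Set ℂ) (Ωn : ℕ → Set ℂ) (hΩ : IsOpen Ω)
    (hconn : IsConnected Ω) (h0 : (0:ℂ) ∈ Ω)
    (hker : ∀ K : Set ℂ, IsCompact K → K ⊆ Ω → ∃ n₀, ∀ n ≥ n₀, K ⊆ Ωn n)
    (fn : ℕ → ℂ → ℂ) (f : ℂ → ℂ)
    (hfn : ∀ n, DifferentiableOn ℂ (fn n) (Ωn n))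
    (hinj : ∀ n, Set.InjOn (fn n) (Ωn n))
    (hder : ∀ n, 1 ≤ (deriv (fn n) 0).re)
    (hf : DifferentiableOn ℂ f Ω)
    (hconv : ∀ K : Set ℂ, IsCompact K → K ⊆ Ω → ∀ ε > 0, ∃ n₀, ∀ n ≥ n₀,
      ∀ z ∈ K, ‖fn n z - f z‖ < ε) :
    (¬ ∃ w : ℂ, ∀ z ∈ Ω, f z = w) ∧ Set.InjOn f Ω := by
  have hV : ∀ K : Set ℂ, IsCompact K → K ⊆ Ω → ∀ᶠ n in atTop, K ⊆ Ωn n :=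
    fun K hK hKΩ => eventually_atTop.2 (hker K hK hKΩ)
  have hloc : TendstoLocallyUniformlyOn fn f atTop Ω :=
    (tendstoLocallyUniformlyOn_iff_forall_isCompact hΩ).2 fun K hKΩ hK =>
      Metric.tendstoUniformlyOn_iff.2 fun ε hε => eventually_atTop.2 <| by
        simpa only [dist_eq_norm'] using hconv K hK hKΩ ε hε
  have hre : 1 ≤ (deriv f 0).re :=
    ge_of_tendsto' (Complex.continuous_re.continuousAt.tendsto.comp
      (tendsto_deriv_of_forall_isCompact_eventually_subset hΩ hloc hV hfn h0)) hder
  have hnc : ¬ ∃ w : ℂ, ∀ z ∈ Ω, f z = w := by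
    rintro ⟨w, hw⟩
    have hconst : f =ᶠ[𝓝 0] fun _ => w := eventually_of_mem (hΩ.mem_nhds h0) hw
    rw [hconst.deriv_eq, deriv_const, Complex.zero_re] at hre
    norm_num at hre
  exact ⟨hnc, injOn_of_tendstoLocallyUniformlyOn hΩ hconn.isPreconnected hf hnc hloc hV hfn hinj⟩

/-- A locally uniform limit (on dynamic domains with kernel Ω) of injective
holomorphic maps fₙ with fₙ(0) = 0 and fₙ'(0) ≥ 1 is nonconstant and injective on Ω. -/
theorem limit_injective (Ω : Set ℂ) (Ωn : ℕ → Set ℂ) (hΩ : IsOpen Ω)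
    (hconn : IsConnected Ω) (h0 : (0:ℂ) ∈ Ω)
    (hΩn : ∀ n, IsOpen (Ωn n)) (h0n : ∀ n, (0:ℂ) ∈ Ωn n)
    (hker : ∀ K : Set ℂ, IsCompact K → K ⊆ Ω → ∃ n₀, ∀ n ≥ n₀, K ⊆ Ωn n)
    (fn : ℕ → ℂ → ℂ) (f : ℂ → ℂ)
    (hfn : ∀ n, DifferentiableOn ℂ (fn n) (Ωn n))
    (hinj : ∀ n, Set.InjOn (fn n) (Ωn n))
    (hfn0 : ∀ n, fn n 0 = 0)
    (hder : ∀ n, 1 ≤ (deriv (fn n) 0).re)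
    (hf : DifferentiableOn ℂ f Ω)
    (hconv : ∀ K : Set ℂ, IsCompact K → K ⊆ Ω → ∀ ε > 0, ∃ n₀, ∀ n ≥ n₀,
      ∀ z ∈ K, ‖fn n z - f z‖ < ε) :
    (¬ ∃ w : ℂ, ∀ z ∈ Ω, f z = w) ∧ Set.InjOn f Ω :=
  limit_injective_general Ω Ωn hΩ hconn h0 hker fn f hfn hinj hder hf hconv
end
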